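/- For every n ∈ ℕ and every x ∈ {1, …, K}, the quantity Σ_{l=0}^{T−1} e^{−2iπnl/T} ⟨w_l, δ_x⟩ ⟨v_l, 𝟙⟩ is nonzero; more precisely, if k ∈ {0, …, T−1} is the index with x ∈ C_k, then this quantity equals T · ξ(x) · Σ_{j : T divides n+k−j} Σ_{y ∈ C_j} ν(y), which is a strictly positive real number. -/
import Mathlib


open Filter Asymptotics

/-- `n`-step sub-transition probabilities: `mpow Q n x y = P_x(Y_n = y, τ > n)`. -/
noncomputable def mpow {K : ℕ} (Q : Fin K → Fin K → ℝ) : ℕ → Fin K → Fin K → ℝ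
  | 0 => fun x y => if x = y then 1 else 0
  | n + 1 => fun x y => ∑ z, mpow Q n x z * Q z y

/-- The left eigenvector `v_l` : `v_l(y) = exp(-2iπ·j(y)·l/T)·ν(y)` where `j(y)` is the index
of the cyclic class of `y`. -/
noncomputable def vkC {K T : ℕ} (j : Fin K → ZMod T) (ν : Fin K → ℝ) (l : ℕ) (y : Fin K) : ℂ :=
  Complex.exp (-(2 * (Real.pi : ℂ) * Complex.I * ((j y).val : ℂ) * (l : ℂ)) / (T : ℂ)) * (ν y : ℂ)

/-- The right eigenvector `w_l` : `w_l(y) = exp(2iπ·j(y)·l/T)·ξ(y)`. -/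
noncomputable def wkC {K T : ℕ} (j : Fin K → ZMod T) (ξ : Fin K → ℝ) (l : ℕ) (y : Fin K) : ℂ :=
  Complex.exp ((2 * (Real.pi : ℂ) * Complex.I * ((j y).val : ℂ) * (l : ℂ)) / (T : ℂ)) * (ξ y : ℂ)

lemma expsum_aux (T : ℕ) (hT : 0 < T) (a : ℤ) :
    ∑ l ∈ Finset.range T, Complex.exp (2 * (Real.pi:ℂ) * Complex.I * (a:ℂ) * (l:ℂ) / (T:ℂ))
      = if (T:ℤ) ∣ a then (T:ℂ) else 0 := by
  have hTne : (T:ℂ) ≠ 0 := Nat.cast_ne_zero.mpr hT.ne'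
  have hpi : (Real.pi:ℂ) ≠ 0 := Complex.ofReal_ne_zero.mpr Real.pi_ne_zero
  set z : ℂ := Complex.exp (2 * (Real.pi:ℂ) * Complex.I * (a:ℂ) / (T:ℂ)) with hzdef
  have hz : ∀ l : ℕ, Complex.exp (2 * (Real.pi:ℂ) * Complex.I * (a:ℂ) * (l:ℂ) / (T:ℂ)) = z ^ l := by
    intro l
    rw [hzdef, ← Complex.exp_nat_mul]
    congr 1
    ring
  have hzT : z ^ T = 1 := by
    rw [hzdef, ← Complex.exp_nat_mul]
    rw [show (T:ℂ) * (2 * (Real.pi:ℂ) * Complex.I * (a:ℂ) / (T:ℂ)) = (a:ℂ) * (2 * (Real.pi:ℂ) * Complex.I) by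
      field_simp]
    exact Complex.exp_int_mul_two_pi_mul_I a
  have hz1 : z = 1 ↔ (T:ℤ) ∣ a := by
    rw [hzdef, Complex.exp_eq_one_iff]
    constructor
    · rintro ⟨m, hm⟩
      refine ⟨m, ?_⟩
      have h2 : (a:ℂ) = (m:ℂ) * (T:ℂ) := by
        field_simp at hm
        have hI : Complex.I ≠ 0 := Complex.I_ne_zero
        have : (2:ℂ) * (Real.pi:ℂ) * Complex.I * (a:ℂ) = (2:ℂ) * (Real.pi:ℂ) * Complex.I * ((m:ℂ) * (T:ℂ)) := by
          rw [hm]; ring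
        exact mul_left_cancel₀ (by simp [hpi, hI]) this
      have : a = m * (T:ℤ) := by exact_mod_cast h2
      rw [this]; ring
    · rintro ⟨m, rfl⟩
      exact ⟨m, by push_cast; field_simp⟩
  simp_rw [hz]
  by_cases hd : (T:ℤ) ∣ a
  · rw [if_pos hd]
    simp [hz1.mpr hd]
  · rw [if_neg hd]
    have hz1' : z ≠ 1 := fun h => hd (hz1.mp h)
    rw [geom_sum_eq hz1', hzT]
    simp

lemma mpow_nonneg {K : ℕ} (Q : Fin K → Fin K → ℝ) (hQnn : ∀ x y, 0 ≤ Q x y) :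
    ∀ (n : ℕ) (x y : Fin K), 0 ≤ mpow Q n x y := by
  intro n
  induction n with
  | zero => intro x y; simp only [mpow]; split_ifs <;> norm_num
  | succ n ih => intro x y
                 exact Finset.sum_nonneg fun z _ => mul_nonneg (ih x z) (hQnn z y)

lemma mpow_xi {K : ℕ} (Q : Fin K → Fin K → ℝ) (ρ : ℝ) (ξ : Fin K → ℝ)
    (hξeig : ∀ y, ∑ z, Q y z * ξ z = ρ * ξ y) :
    ∀ (n : ℕ) (x : Fin K), ∑ y, mpow Q n x y * ξ y = ρ ^ n * ξ x := by
  intro n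
  induction n with
  | zero => intro x; simp [mpow, Finset.sum_ite_eq, ite_mul]
  | succ n ih =>
      intro x
      simp only [mpow]
      calc ∑ y, (∑ z, mpow Q n x z * Q z y) * ξ y
          = ∑ z, ∑ y, mpow Q n x z * (Q z y * ξ y) := by
            rw [Finset.sum_comm]
            exact Finset.sum_congr rfl fun y _ => by
              rw [Finset.sum_mul]
              exact Finset.sum_congr rfl fun z _ => by ring
        _ = ∑ z, mpow Q n x z * (ρ * ξ z) :=
            Finset.sum_congr rfl fun z _ => by rw [← Finset.mul_sum, hξeig z]
        _ = ρ ^ (n+1) * ξ x := by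
            simp_rw [show ∀ z, mpow Q n x z * (ρ * ξ z) = ρ * (mpow Q n x z * ξ z) from
              fun z => by ring]
            rw [← Finset.mul_sum, ih x]; ring

lemma mpow_class {K T : ℕ} (Q : Fin K → Fin K → ℝ) (hQnn : ∀ x y, 0 ≤ Q x y)
    (j : Fin K → ZMod T) (hjstep : ∀ x y, 0 < Q x y → j y = j x + 1) :
    ∀ (n : ℕ) (x y : Fin K), 0 < mpow Q n x y → j y = j x + (n : ZMod T) := by
  intro n
  induction n with
  | zero =>
      intro x y h
      simp only [mpow] at h
      split_ifs at h with hxy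
      · subst hxy; simp
      · norm_num at h
  | succ n ih =>
      intro x y h
      obtain ⟨z, -, hz⟩ := Finset.exists_ne_zero_of_sum_ne_zero h.ne'
      have h1 : 0 < mpow Q n x z := lt_of_le_of_ne (mpow_nonneg Q hQnn n x z)
        (fun hc => hz (by rw [← hc]; ring))
      have h2 : 0 < Q z y := lt_of_le_of_ne (hQnn z y)
        (fun hc => hz (by rw [← hc]; ring))
      rw [hjstep z y h2, ih x z h1]
      push_cast
      ring

lemma rhs_sum {K T : ℕ} (hT : 0 < T) (j : Fin K → ZMod T) (ν : Fin K → ℝ) (m : ℤ) :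
    (∑ jj ∈ Finset.range T,
        if (T:ℤ) ∣ (m - (jj:ℤ)) then
          ∑ y ∈ Finset.univ.filter (fun y => (j y).val = jj), ν y
        else 0)
    = ∑ y : Fin K, if (T:ℤ) ∣ (m - (((j y).val : ℕ) : ℤ)) then ν y else 0 := by
  haveI : NeZero T := ⟨hT.ne'⟩
  rw [← Finset.sum_fiberwise_of_maps_to
      (g := fun y => (j y).val) (t := Finset.range T)
      (fun y _ => Finset.mem_range.mpr (ZMod.val_lt (j y)))
      (fun y => if (T:ℤ) ∣ (m - (((j y).val : ℕ) : ℤ)) then ν y else 0)]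
  refine Finset.sum_congr rfl fun jj _ => ?_
  have h1 : (∑ y ∈ Finset.univ.filter (fun y => (j y).val = jj),
      if (T:ℤ) ∣ (m - (((j y).val : ℕ) : ℤ)) then ν y else 0)
      = ∑ y ∈ Finset.univ.filter (fun y => (j y).val = jj),
      if (T:ℤ) ∣ (m - (jj : ℤ)) then ν y else 0 :=
    Finset.sum_congr rfl fun y hy => by rw [(Finset.mem_filter.mp hy).2]
  rw [h1]
  split_ifs <;> simp

/-- Non-nullity of the oscillating coefficient: for every `n` and every state `x`, with `k`
the index of the cyclic class containing `x`,
`∑_{l<T} e^{-2iπnl/T} ⟨w_l, δ_x⟩ ⟨v_l, 𝟙⟩ = T · ξ(x) · ∑_{j : T ∣ n+k-j} ∑_{y ∈ C_j} ν(y)`,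
which is a strictly positive real number (in particular it is nonzero). -/
theorem oscillating_coefficient_positive
    {K : ℕ} (hK : 0 < K) (Q : Fin K → Fin K → ℝ)
    (hQnn : ∀ x y, 0 ≤ Q x y) (hQsub : ∀ x, ∑ y, Q x y ≤ 1)
    (habs : ∀ x, Filter.Tendsto (fun n => ∑ y, mpow Q n x y) Filter.atTop (nhds 0))
    (hirr : ∀ x y, ∃ n, 0 < mpow Q n x y)
    (T : ℕ) (hT : 0 < T)
    (hTdvd : ∀ (x : Fin K) (n : ℕ), 0 < n → 0 < mpow Q n x x → T ∣ n)
    (hTgcd : ∀ (x : Fin K) (d : ℕ), (∀ n : ℕ, 0 < n → 0 < mpow Q n x x → d ∣ n) → d ∣ T)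
    (j : Fin K → ZMod T) (hj1 : j ⟨0, hK⟩ = 0)
    (hjstep : ∀ x y, 0 < Q x y → j y = j x + 1)
    (ρ : ℝ) (hρ : 0 < ρ)
    (ν ξ : Fin K → ℝ) (hνpos : ∀ y, 0 < ν y) (hξpos : ∀ y, 0 < ξ y)
    (hνeig : ∀ y, ∑ z, ν z * Q z y = ρ * ν y)
    (hξeig : ∀ y, ∑ z, Q y z * ξ z = ρ * ξ y)
    (hνnorm : ∑ y, ν y = 1) (hνξ : ∑ y, ν y * ξ y = 1)
    :
    ∀ (n : ℕ) (x : Fin K),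
      (∑ l ∈ Finset.range T,
          Complex.exp (-(2 * (Real.pi : ℂ) * Complex.I * (n : ℂ) * (l : ℂ)) / (T : ℂ)) *
            (starRingEnd ℂ) (wkC j ξ l x) * ∑ y, (starRingEnd ℂ) (vkC j ν l y))
        = (((T : ℝ) * ξ x *
            ∑ jj ∈ Finset.range T,
              if (T : ℤ) ∣ ((n : ℤ) + ((j x).val : ℤ) - (jj : ℤ)) then
                ∑ y ∈ Finset.univ.filter (fun y => (j y).val = jj), ν y
              else 0 : ℝ) : ℂ) ∧
      0 < (T : ℝ) * ξ x *
            ∑ jj ∈ Finset.range T,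
              if (T : ℤ) ∣ ((n : ℤ) + ((j x).val : ℤ) - (jj : ℤ)) then
                ∑ y ∈ Finset.univ.filter (fun y => (j y).val = jj), ν y
              else 0 := by
  intro n x
  haveI : NeZero T := ⟨hT.ne'⟩
  have hTne : (T:ℂ) ≠ 0 := Nat.cast_ne_zero.mpr hT.ne'
  set a : Fin K → ℤ := fun y => ((j y).val : ℤ) - ((j x).val : ℤ) - (n:ℤ) with ha
  set m : ℤ := (n:ℤ) + ((j x).val : ℤ) with hm
  have haneg : ∀ y, a y = -(m - ((j y).val : ℤ)) := fun y => by rw [ha, hm]; ring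
  -- rewrite the real sum over classes as a sum over states
  have hsum : (∑ jj ∈ Finset.range T,
        if (T:ℤ) ∣ (m - (jj:ℤ)) then
          ∑ y ∈ Finset.univ.filter (fun y => (j y).val = jj), ν y
        else 0)
      = ∑ y : Fin K, if (T:ℤ) ∣ a y then ν y else 0 := by
    rw [rhs_sum hT j ν m]
    refine Finset.sum_congr rfl fun y _ => ?_
    congr 1
    rw [haneg y, dvd_neg]
  -- compute the left-hand side
  have hLHS : (∑ l ∈ Finset.range T,
          Complex.exp (-(2 * (Real.pi : ℂ) * Complex.I * (n : ℂ) * (l : ℂ)) / (T : ℂ)) *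
            (starRingEnd ℂ) (wkC j ξ l x) * ∑ y, (starRingEnd ℂ) (vkC j ν l y))
      = ∑ y, (ξ x : ℂ) * (ν y : ℂ) * (if (T:ℤ) ∣ a y then (T:ℂ) else 0) := by
    have hterm : ∀ l ∈ Finset.range T,
        (Complex.exp (-(2 * (Real.pi : ℂ) * Complex.I * (n : ℂ) * (l : ℂ)) / (T : ℂ)) *
            (starRingEnd ℂ) (wkC j ξ l x) * ∑ y, (starRingEnd ℂ) (vkC j ν l y))
        = ∑ y, (ξ x:ℂ) * (ν y:ℂ) *
            Complex.exp (2 * (Real.pi:ℂ) * Complex.I * ((a y):ℂ) * (l:ℂ) / (T:ℂ)) := by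
      intro l _
      have hw : (starRingEnd ℂ) (wkC j ξ l x)
          = Complex.exp (-(2 * (Real.pi:ℂ) * Complex.I * (((j x).val : ℕ):ℂ) * (l:ℂ)) / (T:ℂ)) * (ξ x : ℂ) := by
        rw [wkC, map_mul, ← Complex.exp_conj, Complex.conj_ofReal]
        congr 1
        simp only [map_div₀, map_mul, map_neg, Complex.conj_I, Complex.conj_ofReal,
          map_natCast, map_ofNat]
        ring
      have hv : ∀ y, (starRingEnd ℂ) (vkC j ν l y)
          = Complex.exp ((2 * (Real.pi:ℂ) * Complex.I * (((j y).val : ℕ):ℂ) * (l:ℂ)) / (T:ℂ)) * (ν y : ℂ) := by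
        intro y
        rw [vkC, map_mul, ← Complex.exp_conj, Complex.conj_ofReal]
        congr 1
        simp only [map_div₀, map_mul, map_neg, Complex.conj_I, Complex.conj_ofReal,
          map_natCast, map_ofNat]
        ring
      rw [hw]
      simp_rw [hv]
      rw [Finset.mul_sum]
      refine Finset.sum_congr rfl fun y _ => ?_
      rw [show Complex.exp (-(2 * (Real.pi : ℂ) * Complex.I * (n : ℂ) * (l : ℂ)) / (T : ℂ)) *
          (Complex.exp (-(2 * (Real.pi:ℂ) * Complex.I * (((j x).val : ℕ):ℂ) * (l:ℂ)) / (T:ℂ)) * (ξ x : ℂ)) *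
          (Complex.exp ((2 * (Real.pi:ℂ) * Complex.I * (((j y).val : ℕ):ℂ) * (l:ℂ)) / (T:ℂ)) * (ν y : ℂ))
          = (ξ x:ℂ) * (ν y:ℂ) *
            (Complex.exp (-(2 * (Real.pi : ℂ) * Complex.I * (n : ℂ) * (l : ℂ)) / (T : ℂ)) *
             Complex.exp (-(2 * (Real.pi:ℂ) * Complex.I * (((j x).val : ℕ):ℂ) * (l:ℂ)) / (T:ℂ)) *
             Complex.exp ((2 * (Real.pi:ℂ) * Complex.I * (((j y).val : ℕ):ℂ) * (l:ℂ)) / (T:ℂ))) from by ring]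
      rw [← Complex.exp_add, ← Complex.exp_add]
      congr 2
      rw [ha]
      push_cast
      field_simp
      ring
    rw [Finset.sum_congr rfl hterm, Finset.sum_comm]
    refine Finset.sum_congr rfl fun y _ => ?_
    rw [← Finset.mul_sum, expsum_aux T hT (a y)]
  -- cast the right-hand side
  have hR : (((T : ℝ) * ξ x *
        ∑ jj ∈ Finset.range T,
          if (T : ℤ) ∣ (m - (jj : ℤ)) then
            ∑ y ∈ Finset.univ.filter (fun y => (j y).val = jj), ν y
          else 0 : ℝ) : ℂ)
      = ∑ y, (ξ x : ℂ) * (ν y : ℂ) * (if (T:ℤ) ∣ a y then (T:ℂ) else 0) := by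
    rw [hsum]
    push_cast [apply_ite (fun r : ℝ => (r:ℂ))]
    rw [Finset.mul_sum]
    refine Finset.sum_congr rfl fun y _ => ?_
    split_ifs <;> ring
  -- positive witness
  have hsx := mpow_xi Q ρ ξ hξeig n x
  have hpos : (0:ℝ) < ρ ^ n * ξ x := mul_pos (pow_pos hρ n) (hξpos x)
  have hne : (∑ y, mpow Q n x y * ξ y) ≠ 0 := by rw [hsx]; exact hpos.ne'
  obtain ⟨z, -, hz0⟩ := Finset.exists_ne_zero_of_sum_ne_zero hne
  have hz : 0 < mpow Q n x z := lt_of_le_of_ne (mpow_nonneg Q hQnn n x z)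
    (fun hc => hz0 (by rw [← hc]; ring))
  have hjz : j z = j x + (n : ZMod T) := mpow_class Q hQnn j hjstep n x z hz
  have hdvd : (T:ℤ) ∣ a z := by
    have h0 : ((a z : ℤ) : ZMod T) = 0 := by
      rw [ha]
      push_cast
      rw [ZMod.natCast_val, ZMod.natCast_val, ZMod.cast_id, ZMod.cast_id, hjz]
      ring
    exact (ZMod.intCast_zmod_eq_zero_iff_dvd _ _).mp h0
  constructor
  · exact hLHS.trans hR.symm
  · rw [hsum]
    refine mul_pos (mul_pos (by exact_mod_cast hT) (hξpos x)) ?_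
    refine Finset.sum_pos' (fun y _ => by split_ifs; exacts [(hνpos y).le, le_rfl])
      ⟨z, Finset.mem_univ z, ?_⟩
    rw [if_pos hdvd]
    exact hνpos z
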